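/- For a vertex v = (a,b) of the triangulated product Δ, let M_v be the matrix over ℚ whose rows are indexed by the edges r of Δ containing v, whose columns are indexed by the vertices w of Δ, and whose (r,w) entry is Div(1_w)(r), where 1_w is the indicator function of w. Then the rank of M_v over ℚ equals the number of diagonal edges of Δ containing v, plus 2. -/

import Mathlib

open scoped Classical
open Finset

section TriangulatedProduct

variable {VG VH : Type*}

/-- The column of the Laplacian matrix of `G` indexed by the vertex `w`:
its entry at `v` is `-deg v` if `v = w`, `1` if `v` is adjacent to `w`, and `0` otherwise. -/
noncomputable def lapCol (G : SimpleGraph VG) [Fintype VG] (w v : VG) : ℤ :=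
  if v = w then -(((Finset.univ.filter (fun u => G.Adj v u)).card : ℤ))
  else if G.Adj v w then 1 else 0

/-- A divisor on a finite graph is principal if it lies in the ℤ-span of the
columns of the Laplacian matrix of the graph. -/
def GraphPrincipal (G : SimpleGraph VG) [Fintype VG] (D : VG → ℤ) : Prop :=
  ∃ f : VG → ℤ, ∀ v, D v = ∑ w, f w * lapCol G w v

/-- A triangulated product of the graphs `G` and `H`: for each square
(an edge `aa'` of `G` together with an edge `bb'` of `H`) exactly one of the two
possible diagonals `{(a,b),(a',b')}`, `{(a,b'),(a',b)}` is chosen.  The structure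
records the resulting symmetric "diagonal edge" relation. -/
structure TriProd (G : SimpleGraph VG) (H : SimpleGraph VH) where
  diag : VG × VH → VG × VH → Prop
  diag_symm : ∀ u v, diag u v → diag v u
  diag_adj : ∀ a a' b b', diag (a, b) (a', b') → G.Adj a a' ∧ H.Adj b b'
  diag_choice : ∀ a a' b b', G.Adj a a' → H.Adj b b' →
    (diag (a, b) (a', b') ∧ ¬ diag (a, b') (a', b)) ∨
    (¬ diag (a, b) (a', b') ∧ diag (a, b') (a', b))

namespace TriProd

variable {G : SimpleGraph VG} {H : SimpleGraph VH}

/-- `u` and `v` form an edge of the triangulated product: a horizontal edge,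
a vertical edge, or a diagonal edge. -/
def Adj (T : TriProd G H) (u v : VG × VH) : Prop :=
  (u.2 = v.2 ∧ G.Adj u.1 v.1) ∨ (u.1 = v.1 ∧ H.Adj u.2 v.2) ∨ T.diag u v

/-- `{u, v, w}` is a triangle (2-face) of the triangulated product. -/
def IsFace (T : TriProd G H) (u v w : VG × VH) : Prop :=
  ∃ a a' b b', T.diag (a, b) (a', b') ∧
    ({u, v, w} : Finset (VG × VH)) = {(a, b), (a', b'), (a', b)}

/-- `{u, v, w}` is a triangle of the triangulated product whose diagonal edge
does not contain the vertex `x`. -/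
def IsFaceAvoiding (T : TriProd G H) (u v w x : VG × VH) : Prop :=
  ∃ a a' b b', T.diag (a, b) (a', b') ∧
    ({u, v, w} : Finset (VG × VH)) = {(a, b), (a', b'), (a', b)} ∧
    x ≠ (a, b) ∧ x ≠ (a', b')

variable [Fintype VG] [Fintype VH]

/-- The structure constant `α(e, x)` for the edge `e = {u, v}` of the
triangulated product and the vertex `x`. -/
noncomputable def alpha (T : TriProd G H) (u v x : VG × VH) : ℤ :=
  if x = u ∨ x = v then
    (if T.diag u v then 1
     else ((Finset.univ.filter (fun w => T.IsFaceAvoiding u v w x)).card : ℤ))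
  else 0

/-- The divisor of the function `φ`, evaluated at the edge `{u, v}` of the
triangulated product: the sum of `φ` over the third vertices of the triangles
containing `{u, v}`, minus `α({u,v},u) φ(u) + α({u,v},v) φ(v)`. -/
noncomputable def Div (T : TriProd G H) (φ : VG × VH → ℤ) (u v : VG × VH) : ℤ :=
  (∑ w ∈ Finset.univ.filter (fun w => T.IsFace u v w), φ w)
    - (T.alpha u v u * φ u + T.alpha u v v * φ v)

/-- A divisor on the triangulated product (a function on edges, encoded as a
function on ordered pairs of vertices) is principal if it agrees with `Div φ`
on every edge, for some `φ`. -/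
def Principal (T : TriProd G H) (D : VG × VH → VG × VH → ℤ) : Prop :=
  ∃ φ : VG × VH → ℤ, ∀ u v, T.Adj u v → D u v = T.Div φ u v

/-- A divisor on the triangulated product is Cartier if near every vertex `x`
it agrees with a principal divisor on all edges containing `x`. -/
def Cartier (T : TriProd G H) (D : VG × VH → VG × VH → ℤ) : Prop :=
  ∀ x : VG × VH, ∃ φ : VG × VH → ℤ,
    ∀ u v, T.Adj u v → (x = u ∨ x = v) → D u v = T.Div φ u v

/-- A divisor is ℚ-Cartier if some nonzero integer multiple of it is Cartier. -/
def QCartier (T : TriProd G H) (D : VG × VH → VG × VH → ℤ) : Prop :=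
  ∃ m : ℤ, m ≠ 0 ∧ T.Cartier (fun u v => m * D u v)

/-- The balancing conditions for a divisor `D` on the triangulated product. -/
def Balanced (T : TriProd G H) (D : VG × VH → VG × VH → ℤ) : Prop :=
  ∀ a : VG, ∀ b : VH,
    (∀ x x' : VG, G.Adj a x → G.Adj a x' →
      (∑ c ∈ Finset.univ.filter (fun c : VH => T.Adj (a, b) (x, c)), D (a, b) (x, c)) =
      (∑ c ∈ Finset.univ.filter (fun c : VH => T.Adj (a, b) (x', c)), D (a, b) (x', c))) ∧
    (∀ y y' : VH, H.Adj b y → H.Adj b y' →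
      (∑ c ∈ Finset.univ.filter (fun c : VG => T.Adj (a, b) (c, y)), D (a, b) (c, y)) =
      (∑ c ∈ Finset.univ.filter (fun c : VG => T.Adj (a, b) (c, y')), D (a, b) (c, y')))

end TriProd

/-- The map `β` sending a pair of divisors on `G` and `H` to a divisor on the
triangulated product: `C(a)` on vertical edges `{(a,b),(a,b')}`, `D(b)` on
horizontal edges `{(a,b),(a',b)}`, and `0` on diagonal edges. -/
noncomputable def beta (C : VG → ℤ) (D : VH → ℤ) (u v : VG × VH) : ℤ :=
  if u.1 = v.1 then C u.1 else if u.2 = v.2 then D u.2 else 0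

end TriangulatedProduct

/-
Near `v = (a, b)` the divisor of `φ` is governed by three pieces of local data: the square
defects `φ(x,b) + φ(a,y) - φ(a,b) - φ(x,y)` at the diagonal neighbours `(x,y)` of `v` (these are
the values of `Div φ` on the diagonal edges), and the two sums `∑_{y ~ b} (φ(a,y) - φ(a,b))` and
`∑_{x ~ a} (φ(x,b) - φ(a,b))`. On a horizontal edge `{(a,b), (x,b)}`, `Div φ` is the first sum
minus the square defects at the diagonal neighbours `(x,y)`, because the squares over the edge
split the neighbours `y` of `b` according to which diagonal was chosen; vertical edges follow by
exchanging the factors. As every vertex has a neighbour, `Div φ` vanishes near `v` exactly when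
the local data do, so `M_v` has the same kernel as the local data map. The latter is onto
`ℚ^{diagonal neighbours} × ℚ × ℚ`: prescribe `φ` on the horizontal and vertical neighbours, and
the square defects then fix `φ` on the diagonal ones.
-/
lemma LinearMap.finrank_range_eq_of_ker_eq {K V W W' : Type*} [Ring K]
    [AddCommGroup V] [Module K V] [AddCommGroup W] [Module K W] [AddCommGroup W'] [Module K W']
    {f : V →ₗ[K] W} {g : V →ₗ[K] W'} (h : LinearMap.ker f = LinearMap.ker g) :
    Module.finrank K (LinearMap.range f) = Module.finrank K (LinearMap.range g) :=
  (f.quotKerEquivRange.symm ≪≫ₗ Submodule.quotEquivOfEq _ _ h ≪≫ₗ g.quotKerEquivRange).finrank_eq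

-- `Prod.swap` maps the triangle `{(a,b), (a',b'), (a',b)}` to `{(b,a), (b',a'), (b,a')}`, which
-- is the triangle of the same shape built on the reversed diagonal `(b',a'), (b,a)`.
lemma Finset.triple_swap_eq_iff {α β : Type*} [DecidableEq α] [DecidableEq β] {u v w : β × α}
    {a a' : α} {b b' : β} :
    ({u, v, w} : Finset (β × α)) = {(b, a), (b', a'), (b', a)} ↔
      ({u.swap, v.swap, w.swap} : Finset (α × β)) = {(a', b'), (a, b), (a, b')} := by
  simp only [Finset.ext_iff, Finset.mem_insert, Finset.mem_singleton]
  refine ⟨fun h p => ?_, fun h p => ?_⟩ <;>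
  · have := h p.swap
    grind [Prod.swap_inj, Prod.swap_swap]

def squareDefect {α β R : Type*} [AddCommGroup R] (φ : α × β → R) (v w : α × β) : R :=
  φ (w.1, v.2) + φ (v.1, w.2) - φ v - φ w

namespace TriProd

variable {VG VH : Type*} {G : SimpleGraph VG} {H : SimpleGraph VH} (T : TriProd G H)

lemma diag_comm {u v : VG × VH} : T.diag u v ↔ T.diag v u :=
  ⟨T.diag_symm u v, T.diag_symm v u⟩

lemma not_diag_same_fst (a : VG) (b y : VH) : ¬ T.diag (a, b) (a, y) :=
  fun hd => (T.diag_adj _ _ _ _ hd).1.ne rfl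

lemma not_diag_same_snd (a x : VG) (b : VH) : ¬ T.diag (a, b) (x, b) :=
  fun hd => (T.diag_adj _ _ _ _ hd).2.ne rfl

lemma diag_iff_not_diag {a x : VG} {b y : VH} (hax : G.Adj a x) (hby : H.Adj b y) :
    T.diag (a, b) (x, y) ↔ ¬ T.diag (x, b) (a, y) := by
  rw [T.diag_comm (u := (x, b))]
  rcases T.diag_choice a x b y hax hby with h | h <;> tauto

def swap : TriProd H G where
  diag p q := T.diag p.swap q.swap
  diag_symm _ _ := T.diag_symm _ _
  diag_adj b b' a a' h := (T.diag_adj a a' b b' h).symm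
  diag_choice b b' a a' hb ha := by
    simp only [Prod.swap_prod_mk, T.diag_comm (u := (a', b))]
    exact T.diag_choice a a' b b' ha hb

lemma swap_diag {p q : VH × VG} : T.swap.diag p q ↔ T.diag p.swap q.swap := Iff.rfl

lemma isFace_swap {u v w : VH × VG} : T.swap.IsFace u v w ↔ T.IsFace u.swap v.swap w.swap :=
  ⟨fun ⟨_, _, _, _, hd, heq⟩ => ⟨_, _, _, _, T.diag_symm _ _ hd, Finset.triple_swap_eq_iff.1 heq⟩,
    fun ⟨_, _, _, _, hd, heq⟩ => ⟨_, _, _, _, T.diag_symm _ _ hd, Finset.triple_swap_eq_iff.2 heq⟩⟩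

lemma isFaceAvoiding_swap {u v w x : VH × VG} :
    T.swap.IsFaceAvoiding u v w x ↔ T.IsFaceAvoiding u.swap v.swap w.swap x.swap := by
  constructor
  · rintro ⟨b, b', a, a', hd, heq, h1, h2⟩
    exact ⟨a', a, b', b, T.diag_symm _ _ hd, Finset.triple_swap_eq_iff.1 heq,
      by grind [Prod.swap_inj, Prod.swap_swap], by grind [Prod.swap_inj, Prod.swap_swap]⟩
  · rintro ⟨a, a', b, b', hd, heq, h1, h2⟩
    exact ⟨b', b, a', a, T.diag_symm _ _ hd, Finset.triple_swap_eq_iff.2 heq,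
      by grind [Prod.swap_inj, Prod.swap_swap], by grind [Prod.swap_inj, Prod.swap_swap]⟩

lemma isFaceAvoiding_comm {u v w x : VG × VH} :
    T.IsFaceAvoiding u v w x ↔ T.IsFaceAvoiding v u w x := by
  simp only [IsFaceAvoiding, Finset.insert_comm u v]

lemma isFace_diag {a x : VG} {b y : VH} (hd : T.diag (a, b) (x, y)) (w : VG × VH) :
    T.IsFace (a, b) (x, y) w ↔ w = (x, b) ∨ w = (a, y) := by
  have hne := T.diag_adj _ _ _ _ hd
  constructor
  · rintro ⟨a₁, a₁', b₁, b₁', hd₁, heq⟩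
    have hne₁ := T.diag_adj _ _ _ _ hd₁
    simp only [Finset.ext_iff, Finset.mem_insert, Finset.mem_singleton] at heq
    have h1 := heq (a, b)
    have h2 := heq (x, y)
    have h3 := heq (a₁', b₁)
    simp only [Prod.ext_iff, true_or, or_true, true_iff] at h1 h2 h3
    grind [SimpleGraph.Adj.ne]
  · rintro (rfl | rfl)
    · exact ⟨a, x, b, y, hd, by grind⟩
    · exact ⟨x, a, y, b, T.diag_symm _ _ hd, by grind⟩

lemma isFace_horiz {a x : VG} {b : VH} (hax : G.Adj a x) (w : VG × VH) :
    T.IsFace (a, b) (x, b) w ↔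
      (∃ y, T.diag (a, b) (x, y) ∧ (x, y) = w) ∨ (∃ y, T.diag (x, b) (a, y) ∧ (a, y) = w) := by
  constructor
  · rintro ⟨a₁, a₁', b₁, b₁', hd, heq⟩
    have hne := T.diag_adj _ _ _ _ hd
    simp only [Finset.ext_iff, Finset.mem_insert, Finset.mem_singleton] at heq
    have h1 := heq (a, b)
    have h2 := heq (x, b)
    have h3 := heq (a₁', b₁')
    simp only [Prod.ext_iff, true_or, or_true, true_iff] at h1 h2 h3
    grind [SimpleGraph.Adj.ne]
  · rintro (⟨y, hd, rfl⟩ | ⟨y, hd, rfl⟩)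
    · exact ⟨a, x, b, y, hd, by grind⟩
    · exact ⟨x, a, b, y, hd, by grind⟩

lemma isFaceAvoiding_horiz {a x : VG} {b : VH} (hax : G.Adj a x) (w : VG × VH) :
    T.IsFaceAvoiding (a, b) (x, b) w (a, b) ↔ ∃ y, T.diag (x, b) (a, y) ∧ (a, y) = w := by
  constructor
  · rintro ⟨a₁, a₁', b₁, b₁', hd, heq, hv1, hv2⟩
    have hne := T.diag_adj _ _ _ _ hd
    simp only [Finset.ext_iff, Finset.mem_insert, Finset.mem_singleton] at heq
    have h1 := heq (a, b)
    have h2 := heq (x, b)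
    have h3 := heq (a₁', b₁')
    simp only [Prod.ext_iff, true_or, or_true, true_iff] at h1 h2 h3
    grind [SimpleGraph.Adj.ne]
  · rintro ⟨y, hd, rfl⟩
    have hne := T.diag_adj _ _ _ _ hd
    exact ⟨x, a, b, y, hd, by grind, by grind [SimpleGraph.Adj.ne],
      by grind [SimpleGraph.Adj.ne]⟩

variable [Fintype VH]

lemma neighborFinset_eq_disjUnion {a x : VG} {b : VH} (hax : G.Adj a x) :
    H.neighborFinset b = (univ.filter fun y => T.diag (a, b) (x, y)).disjUnion
      (univ.filter fun y => T.diag (x, b) (a, y))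
      (Finset.disjoint_filter.2 fun _ _ hd =>
        (T.diag_iff_not_diag hax (T.diag_adj _ _ _ _ hd).2).1 hd) := by
  ext y
  simp only [Finset.disjUnion_eq_union, Finset.mem_union, Finset.mem_filter_univ,
    SimpleGraph.mem_neighborFinset]
  refine ⟨fun hby => ?_, ?_⟩
  · have := T.diag_iff_not_diag hax hby
    tauto
  · rintro (h | h) <;> exact (T.diag_adj _ _ _ _ h).2

variable [Fintype VG]

lemma alpha_comm (u v x : VG × VH) : T.alpha u v x = T.alpha v u x := by
  simp only [alpha, T.isFaceAvoiding_comm (u := u), T.diag_comm (u := u), or_comm]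

lemma alpha_swap (u v x : VG × VH) : T.swap.alpha u.swap v.swap x.swap = T.alpha u v x := by
  simp only [alpha, Prod.swap_inj, isFaceAvoiding_swap, swap_diag, Prod.swap_swap]
  congr 3
  exact Finset.card_equiv (Equiv.prodComm _ _) (by simp)

lemma alpha_horiz {a x : VG} {b : VH} (hax : G.Adj a x) :
    T.alpha (a, b) (x, b) (a, b) = #(univ.filter fun y => T.diag (x, b) (a, y)) := by
  have hfaces : (univ.filter fun w => T.IsFaceAvoiding (a, b) (x, b) w (a, b)) =
      (univ.filter fun y => T.diag (x, b) (a, y)).map (Function.Embedding.sectR a VH) := by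
    ext w
    simp [T.isFaceAvoiding_horiz hax]
  rw [alpha, if_pos (Or.inl rfl), if_neg (T.not_diag_same_snd a x b), hfaces, Finset.card_map]

lemma filter_isFace_horiz {a x : VG} {b : VH} (hax : G.Adj a x) :
    (univ.filter fun w => T.IsFace (a, b) (x, b) w) =
      (univ.filter fun y => T.diag (a, b) (x, y)).map (Function.Embedding.sectR x VH) ∪
      (univ.filter fun y => T.diag (x, b) (a, y)).map (Function.Embedding.sectR a VH) := by
  ext w
  simp [T.isFace_horiz hax]

noncomputable def ratDiv (φ : VG × VH → ℚ) (u v : VG × VH) : ℚ :=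
  (∑ w ∈ univ.filter (T.IsFace u v), φ w) - (T.alpha u v u * φ u + T.alpha u v v * φ v)

lemma sum_Div_indicator_mul (u v : VG × VH) (φ : VG × VH → ℚ) :
    ∑ w, ((T.Div (fun p => if p = w then 1 else 0) u v : ℤ) : ℚ) * φ w = T.ratDiv φ u v := by
  simp only [Div]
  push_cast
  simp only [sub_mul, add_mul, Finset.sum_mul, Finset.sum_sub_distrib, Finset.sum_add_distrib]
  rw [Finset.sum_comm]
  simp [ite_mul, mul_ite, ratDiv]

lemma ratDiv_swap (φ : VG × VH → ℚ) (u v : VG × VH) :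
    T.swap.ratDiv (φ ∘ Prod.swap) u.swap v.swap = T.ratDiv φ u v := by
  simp only [ratDiv, alpha_swap, Function.comp_apply, Prod.swap_swap]
  congr 1
  exact Finset.sum_equiv (Equiv.prodComm _ _) (by simp [isFace_swap]) (by simp)

lemma ratDiv_diag {a x : VG} {b y : VH} (hd : T.diag (a, b) (x, y)) (φ : VG × VH → ℚ) :
    T.ratDiv φ (a, b) (x, y) = squareDefect φ (a, b) (x, y) := by
  have hne : ((x, b) : VG × VH) ≠ (a, y) := fun h => (T.diag_adj _ _ _ _ hd).1.ne (by simp_all)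
  have hfaces : univ.filter (T.IsFace (a, b) (x, y)) = {(x, b), (a, y)} := by
    ext w
    simp [T.isFace_diag hd]
  rw [ratDiv, hfaces, Finset.sum_pair hne]
  simp [alpha, hd, squareDefect]
  ring

lemma ratDiv_horiz {a x : VG} {b : VH} (hax : G.Adj a x) (φ : VG × VH → ℚ) :
    T.ratDiv φ (a, b) (x, b) = ∑ y ∈ H.neighborFinset b, (φ (a, y) - φ (a, b)) -
      ∑ y ∈ univ.filter (fun y => T.diag (a, b) (x, y)), squareDefect φ (a, b) (x, y) := by
  have hdisj : Disjoint
      ((univ.filter fun y => T.diag (a, b) (x, y)).map (Function.Embedding.sectR x VH))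
      ((univ.filter fun y => T.diag (x, b) (a, y)).map (Function.Embedding.sectR a VH)) := by
    simp only [Finset.disjoint_left, Finset.mem_map, Function.Embedding.sectR_apply]
    rintro _ ⟨_, _, rfl⟩ ⟨_, _, h⟩
    exact hax.ne (congrArg Prod.fst h)
  rw [ratDiv, filter_isFace_horiz T hax, Finset.sum_union hdisj, Finset.sum_map, Finset.sum_map,
    alpha_horiz T hax, alpha_comm, alpha_horiz T hax.symm, neighborFinset_eq_disjUnion T hax,
    Finset.sum_disjUnion]
  simp only [squareDefect, Function.Embedding.sectR_apply, Finset.sum_sub_distrib,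
    Finset.sum_add_distrib, Finset.sum_const, nsmul_eq_mul]
  push_cast
  ring

lemma ratDiv_vert {a : VG} {b y : VH} (hby : H.Adj b y) (φ : VG × VH → ℚ) :
    T.ratDiv φ (a, b) (a, y) = ∑ x ∈ G.neighborFinset a, (φ (x, b) - φ (a, b)) -
      ∑ x ∈ univ.filter (fun x => T.diag (a, b) (x, y)), squareDefect φ (a, b) (x, y) := by
  rw [← T.ratDiv_swap, Prod.swap_prod_mk, Prod.swap_prod_mk, T.swap.ratDiv_horiz hby]
  simp [squareDefect, swap_diag, add_comm]

noncomputable def localData (v : VG × VH) :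
    (VG × VH → ℚ) →ₗ[ℚ] ({w // T.diag v w} → ℚ) × ℚ × ℚ where
  toFun φ := (fun w => squareDefect φ v w, ∑ y ∈ H.neighborFinset v.2, (φ (v.1, y) - φ v),
    ∑ x ∈ G.neighborFinset v.1, (φ (x, v.2) - φ v))
  map_add' φ ψ := by
    ext <;> simp [squareDefect, Finset.sum_add_distrib] <;> ring
  map_smul' c φ := by
    ext <;> simp [squareDefect, ← Finset.mul_sum] <;> ring

lemma localData_eq_zero_iff {v : VG × VH} (hx : ∃ x, G.Adj v.1 x) (hy : ∃ y, H.Adj v.2 y)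
    (φ : VG × VH → ℚ) : T.localData v φ = 0 ↔ ∀ u, T.Adj v u → T.ratDiv φ v u = 0 := by
  obtain ⟨a, b⟩ := v
  simp only [localData, LinearMap.coe_mk, AddHom.coe_mk, Prod.mk_eq_zero, funext_iff,
    Pi.zero_apply, Subtype.forall]
  have horiz (hsq : ∀ w, T.diag (a, b) w → squareDefect φ (a, b) w = 0) {x} (hax : G.Adj a x) :
      T.ratDiv φ (a, b) (x, b) = ∑ y ∈ H.neighborFinset b, (φ (a, y) - φ (a, b)) := by
    rw [T.ratDiv_horiz hax, Finset.sum_eq_zero fun y hy => hsq _ (Finset.mem_filter.1 hy).2,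
      sub_zero]
  have vert (hsq : ∀ w, T.diag (a, b) w → squareDefect φ (a, b) w = 0) {y} (hby : H.Adj b y) :
      T.ratDiv φ (a, b) (a, y) = ∑ x ∈ G.neighborFinset a, (φ (x, b) - φ (a, b)) := by
    rw [T.ratDiv_vert hby, Finset.sum_eq_zero fun x hx => hsq _ (Finset.mem_filter.1 hx).2,
      sub_zero]
  constructor
  · rintro ⟨hsq, hs, ht⟩ ⟨x, y⟩ (⟨rfl, hax⟩ | ⟨rfl, hby⟩ | hd)
    · rw [horiz hsq hax, hs]
    · rw [vert hsq hby, ht]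
    · rw [T.ratDiv_diag hd, hsq _ hd]
  · intro h
    have hsq : ∀ w, T.diag (a, b) w → squareDefect φ (a, b) w = 0 := fun ⟨x, y⟩ hd =>
      (T.ratDiv_diag hd φ).symm.trans (h _ (Or.inr (Or.inr hd)))
    obtain ⟨x, hax⟩ := hx
    obtain ⟨y, hby⟩ := hy
    exact ⟨hsq, (horiz hsq hax).symm.trans (h _ (Or.inl ⟨rfl, hax⟩)),
      (vert hsq hby).symm.trans (h _ (Or.inr (Or.inl ⟨rfl, hby⟩)))⟩

lemma localData_surjective {v : VG × VH} (hx : ∃ x, G.Adj v.1 x) (hy : ∃ y, H.Adj v.2 y) :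
    Function.Surjective (T.localData v) := by
  obtain ⟨a, b⟩ := v
  rintro ⟨z, s, t⟩
  have hdegG : (G.degree a : ℚ) ≠ 0 := by
    exact_mod_cast (G.degree_pos_iff_exists_adj a).2 hx |>.ne'
  have hdegH : (H.degree b : ℚ) ≠ 0 := by
    exact_mod_cast (H.degree_pos_iff_exists_adj b).2 hy |>.ne'
  let φ : VG × VH → ℚ := fun p =>
    if h : T.diag (a, b) p then t / G.degree a + s / H.degree b - z ⟨p, h⟩
    else if p = (a, b) then 0
    else if p.2 = b then t / G.degree a
    else if p.1 = a then s / H.degree b else 0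
  have hφ₀ : φ (a, b) = 0 := by simp [φ, T.not_diag_same_fst]
  have hφG : ∀ x, G.Adj a x → φ (x, b) = t / G.degree a := fun x hax => by
    simp [φ, T.not_diag_same_snd, hax.ne.symm]
  have hφH : ∀ y, H.Adj b y → φ (a, y) = s / H.degree b := fun y hby => by
    simp [φ, T.not_diag_same_fst, hby.ne.symm]
  refine ⟨φ, ?_⟩
  simp only [localData, LinearMap.coe_mk, AddHom.coe_mk, Prod.mk.injEq]
  refine ⟨funext fun ⟨⟨x, y⟩, hd⟩ => ?_, ?_, ?_⟩
  · obtain ⟨hax, hby⟩ := T.diag_adj _ _ _ _ hd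
    simp only [squareDefect, hφG x hax, hφH y hby, hφ₀]
    simp [φ, hd]
  · rw [Finset.sum_congr rfl fun y hy => by rw [hφH y ((H.mem_neighborFinset b y).1 hy), hφ₀],
      Finset.sum_const, H.card_neighborFinset_eq_degree, nsmul_eq_mul, sub_zero,
      mul_div_cancel₀ _ hdegH]
  · rw [Finset.sum_congr rfl fun x hx => by rw [hφG x ((G.mem_neighborFinset a x).1 hx), hφ₀],
      Finset.sum_const, G.card_neighborFinset_eq_degree, nsmul_eq_mul, sub_zero,
      mul_div_cancel₀ _ hdegG]

lemma mulVec_eq_ratDiv (v : VG × VH) (φ : VG × VH → ℚ) :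
    (Matrix.of fun (u : {u // T.Adj v u}) (w : VG × VH) =>
        ((T.Div (fun p => if p = w then 1 else 0) v u.1 : ℤ) : ℚ)).mulVec φ =
      fun u => T.ratDiv φ v u.1 := by
  ext u
  exact T.sum_Div_indicator_mul v u φ

end TriProd

/-- For a vertex `v` of the triangulated product `Δ`, the matrix `M_v`
(rows indexed by the edges of `Δ` containing `v`, i.e. by the neighbours of `v` in `Δ`;
columns indexed by the vertices `w` of `Δ`; entry `Div(1_w)` evaluated at the given edge)
has rank over ℚ equal to the number of diagonal edges of `Δ` containing `v`, plus `2`. -/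
theorem rank_local_matrix {VG VH : Type*} [Fintype VG] [Fintype VH]
    (G : SimpleGraph VG) (H : SimpleGraph VH)
    (hG : G.Connected) (hH : H.Connected)
    (hGe : ∃ a a', G.Adj a a') (hHe : ∃ b b', H.Adj b b')
    (T : TriProd G H)
    (v : VG × VH) :
    (Matrix.of fun (u : {u : VG × VH // T.Adj v u}) (w : VG × VH) =>
        ((T.Div (fun p => if p = w then 1 else 0) v u.1 : ℤ) : ℚ)).rank =
      (Finset.univ.filter (fun u : VG × VH => T.diag v u)).card + 2 := by
  obtain ⟨a, a', ha⟩ := hGe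
  obtain ⟨b, b', hb⟩ := hHe
  have : Nontrivial VG := ⟨a, a', ha.ne⟩
  have : Nontrivial VH := ⟨b, b', hb.ne⟩
  have hx := hG.preconnected.exists_adj_of_nontrivial v.1
  have hy := hH.preconnected.exists_adj_of_nontrivial v.2
  have hker : LinearMap.ker (Matrix.of fun (u : {u : VG × VH // T.Adj v u}) (w : VG × VH) =>
      ((T.Div (fun p => if p = w then 1 else 0) v u.1 : ℤ) : ℚ)).mulVecLin =
      LinearMap.ker (T.localData v) := by
    ext φ
    rw [LinearMap.mem_ker, LinearMap.mem_ker, Matrix.mulVecLin_apply, T.mulVec_eq_ratDiv,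
      T.localData_eq_zero_iff hx hy]
    simp only [funext_iff, Pi.zero_apply, Subtype.forall]
  rw [Matrix.rank, LinearMap.finrank_range_eq_of_ker_eq hker,
    LinearMap.range_eq_top.2 (T.localData_surjective hx hy), finrank_top, Module.finrank_prod,
    Module.finrank_prod, Module.finrank_pi, Module.finrank_self, Fintype.card_subtype]
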